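/- arXiv:1804.05264 — 2 statements merged into one kernel-verified Lean document; each statement's English description precedes it below -/
import Mathlib

section
/- If V is a realization of M and W is a normal matrix for V, then the slack matrix S = Vᵀ * W satisfies Matrix.rank S = d + 1. -/
open Classical Matrix MvPolynomial

/-- `V` is a realization of the matroid `M`: a set `I` is independent in `M` iff the
columns of `V` indexed by `I` are linearly independent over `k`. -/
def IsRealization {k : Type*} [Field k] {n d : ℕ} (M : Matroid (Fin n))
    (V : Matrix (Fin (d + 1)) (Fin n) k) : Prop :=
  ∀ I : Set (Fin n), M.Indep I ↔ LinearIndependent k (fun i : I => Vᵀ (i : Fin n))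

/-- `F` is a hyperplane of `M`: a flat of `M` of rank `d`. -/
def IsHyperplane {n : ℕ} (M : Matroid (Fin n)) (d : ℕ) (F : Set (Fin n)) : Prop :=
  M.IsFlat F ∧ ∃ I, M.IsBasis I F ∧ I.ncard = d

/-- `H` is a bijection onto the set of hyperplanes of `M`. -/
def HypEnum {n h : ℕ} (M : Matroid (Fin n)) (d : ℕ) (H : Fin h → Set (Fin n)) : Prop :=
  Function.Injective H ∧ ∀ F : Set (Fin n), (∃ j, H j = F) ↔ IsHyperplane M d F

/-- `M` has rank `r` : some base of `M` has cardinality `r`. -/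
def HasRank {n : ℕ} (M : Matroid (Fin n)) (r : ℕ) : Prop :=
  ∃ B, M.IsBase B ∧ B.ncard = r

/-- `W` is a normal matrix for the realization `V`: the dot product of column `j` of `W`
with column `i` of `V` is zero iff `i ∈ H j`. -/
def IsNormalMatrix {k : Type*} [Field k] {n d h : ℕ} (H : Fin h → Set (Fin n))
    (V : Matrix (Fin (d + 1)) (Fin n) k) (W : Matrix (Fin (d + 1)) (Fin h) k) : Prop :=
  ∀ i j, (∑ r : Fin (d + 1), W r j * V r i) = 0 ↔ i ∈ H j

/-- Projective equivalence of realizations. -/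
def ProjEquiv {k : Type*} [Field k] {n d : ℕ}
    (V V' : Matrix (Fin (d + 1)) (Fin n) k) : Prop :=
  ∃ (A : Matrix (Fin (d + 1)) (Fin (d + 1)) k) (b : Fin n → kˣ),
    IsUnit A ∧ V' = A * V * Matrix.diagonal (fun i => (b i : k))

/-- The index type of slack variables: pairs `(i, j)` with `i ∉ H j`. -/
abbrev SlackVar {n h : ℕ} (H : Fin h → Set (Fin n)) : Type :=
  {p : Fin n × Fin h // p.1 ∉ H p.2}

/-- The symbolic slack matrix of `M`. -/
noncomputable def symbSlack {n h : ℕ} (H : Fin h → Set (Fin n)) (k : Type*) [Field k] :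
    Matrix (Fin n) (Fin h) (MvPolynomial (SlackVar H) k) :=
  fun i j => if hij : i ∈ H j then 0 else X ⟨(i, j), hij⟩

/-- The ideal `J` generated by the `(d+2)`-minors of the symbolic slack matrix. -/
noncomputable def minorIdeal {n h : ℕ} (d : ℕ) (H : Fin h → Set (Fin n)) (k : Type*)
    [Field k] : Ideal (MvPolynomial (SlackVar H) k) :=
  Ideal.span { f | ∃ (r : Fin (d + 2) → Fin n) (c : Fin (d + 2) → Fin h),
    Function.Injective r ∧ Function.Injective c ∧
      f = ((symbSlack H k).submatrix r c).det }

/-- The product `P` of all slack variables. -/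
noncomputable def allVarsProd {n h : ℕ} (H : Fin h → Set (Fin n)) (k : Type*) [Field k] :
    MvPolynomial (SlackVar H) k :=
  ∏ e : SlackVar H, X e

/-- The slack ideal `I_M` : the saturation of `J` at `P`, as a set. -/
noncomputable def slackSet {n h : ℕ} (d : ℕ) (H : Fin h → Set (Fin n)) (k : Type*) [Field k] :
    Set (MvPolynomial (SlackVar H) k) :=
  {f | ∃ N : ℕ, allVarsProd H k ^ N * f ∈ minorIdeal d H k}

/-- The matrix `S(s)` obtained by evaluating the symbolic slack matrix at `s`. -/
noncomputable def slackEval {k : Type*} [Field k] {n h : ℕ} (H : Fin h → Set (Fin n))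
    (s : SlackVar H → k) : Matrix (Fin n) (Fin h) k :=
  fun i j => if hij : i ∈ H j then 0 else s ⟨(i, j), hij⟩

/-- Cyclic successor in `Fin m`. -/
def cycSucc {m : ℕ} (i : Fin m) : Fin m := ⟨(i.val + 1) % m, Nat.mod_lt _ i.pos⟩

/-- The cycle ideal `C_S` of a slack matrix `S`. -/
noncomputable def cycleIdeal {k : Type*} [Field k] {n h : ℕ} (H : Fin h → Set (Fin n))
    (S : Matrix (Fin n) (Fin h) k) : Ideal (MvPolynomial (SlackVar H) k) :=
  Ideal.span { f | ∃ (m : ℕ) (_ : 2 ≤ m) (a : Fin m → Fin n) (b : Fin m → Fin h)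
    (_ : Function.Injective a) (_ : Function.Injective b)
    (h1 : ∀ i, a i ∉ H (b i)) (h2 : ∀ i, a (cycSucc i) ∉ H (b i)),
    f = C (∏ i, S (a (cycSucc i)) (b i)) * ∏ i, X ⟨(a i, b i), h1 i⟩
      - C (∏ i, S (a i) (b i)) * ∏ i, X ⟨(a (cycSucc i), b i), h2 i⟩ }

/-! The fundamental hyperplanes of a basis `b₀, …, b_d` of `M`, the closures of `B \ {bₐ}`,
contain exactly the basis elements other than `bₐ`. Hence the `(d+1) × (d+1)` submatrix of the
slack matrix on these rows and columns is diagonal with nonzero diagonal, so the rank is at least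
`d + 1`; it is at most `d + 1` because `W` has `d + 1` rows. -/

theorem Matrix.card_le_rank_of_apply_eq_zero_iff {ι m n K : Type*} [Fintype ι] [Fintype n]
    [Field K] (A : Matrix m n K) (r : ι → m) (c : ι → n)
    (h : ∀ a b, A (r a) (c b) = 0 ↔ a ≠ b) : Fintype.card ι ≤ A.rank := by
  have hdiag : A.submatrix r c = diagonal fun a => A (r a) (c a) := by
    ext a b
    by_cases hab : a = b
    · simp [hab]
    · simp [hab, (h a b).mpr hab]
  calc Fintype.card ι = (A.submatrix r c).rank := by
        rw [hdiag, rank_diagonal, Fintype.card_subtype, Finset.filter_true_of_mem]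
        · rfl
        · exact fun a _ h0 => (h a a).mp h0 rfl
    _ ≤ A.rank := rank_submatrix_le A r c

lemma Matroid.Indep.mem_closure_diff_singleton_iff {α : Type*} {M : Matroid α} {B : Set α}
    {e x : α} (hB : M.Indep B) (he : e ∈ B) (hx : x ∈ B) :
    x ∈ M.closure (B \ {e}) ↔ x ≠ e := by
  refine ⟨fun hxc hxe => hB.notMem_closure_sdiff_of_mem he (hxe ▸ hxc), fun hxe => ?_⟩
  exact M.subset_closure _ (Set.sdiff_subset.trans hB.subset_ground)
    ⟨hx, Set.notMem_singleton_iff.mpr hxe⟩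

lemma isHyperplane_closure_diff_singleton {n d : ℕ} {M : Matroid (Fin n)} {B : Set (Fin n)}
    {e : Fin n} (hB : M.IsBase B) (hcard : B.ncard = d + 1) (he : e ∈ B) :
    IsHyperplane M d (M.closure (B \ {e})) :=
  ⟨M.isFlat_closure _, B \ {e}, (hB.indep.subset Set.sdiff_subset).isBasis_closure, by
    rw [Set.ncard_sdiff_singleton_of_mem he, hcard, Nat.add_sub_cancel]⟩

lemma exists_fundamental_hyperplanes {n d h : ℕ} {M : Matroid (Fin n)}
    {H : Fin h → Set (Fin n)} (hrk : HasRank M (d + 1)) (hH : HypEnum M d H) :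
    ∃ (r : Fin (d + 1) → Fin n) (c : Fin (d + 1) → Fin h), ∀ a b, r a ∈ H (c b) ↔ a ≠ b := by
  obtain ⟨B, hB, hcard⟩ := hrk
  let enum : Fin (d + 1) ≃ B :=
    (Finite.equivFinOfCardEq ((Nat.card_coe_set_eq B).trans hcard)).symm
  choose c hc using fun a =>
    (hH.2 _).mpr (isHyperplane_closure_diff_singleton hB hcard (enum a).2)
  refine ⟨fun a => enum a, c, fun a b => ?_⟩
  rw [hc, hB.indep.mem_closure_diff_singleton_iff (enum b).2 (enum a).2, Ne, Ne,
    ← Subtype.ext_iff, enum.injective.eq_iff]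

theorem stmt1_general {k : Type*} [Field k] {n d h : ℕ} (M : Matroid (Fin n))
    (hrk : HasRank M (d + 1))
    (H : Fin h → Set (Fin n)) (hH : HypEnum M d H)
    (V : Matrix (Fin (d + 1)) (Fin n) k)
    (W : Matrix (Fin (d + 1)) (Fin h) k) (hW : IsNormalMatrix H V W) :
    (Vᵀ * W).rank = d + 1 := by
  obtain ⟨r, c, hrc⟩ := exists_fundamental_hyperplanes hrk hH
  have hslack : ∀ i j, (Vᵀ * W) i j = 0 ↔ i ∈ H j := fun i j => by
    simp_rw [← hW i j, mul_apply, transpose_apply, mul_comm]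
  refine le_antisymm ?_ ?_
  · simpa using (rank_mul_le_right Vᵀ W).trans W.rank_le_card_height
  · simpa using (Vᵀ * W).card_le_rank_of_apply_eq_zero_iff r c
      fun a b => (hslack _ _).trans (hrc a b)

/-- the slack matrix of a realization of a rank `d+1` matroid has rank `d+1`. -/
theorem stmt1 {k : Type*} [Field k] {n d h : ℕ} (M : Matroid (Fin n))
    (hE : M.E = Set.univ) (hrk : HasRank M (d + 1))
    (H : Fin h → Set (Fin n)) (hH : HypEnum M d H)
    (V : Matrix (Fin (d + 1)) (Fin n) k) (hV : IsRealization M V)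
    (W : Matrix (Fin (d + 1)) (Fin h) k) (hW : IsNormalMatrix H V W) :
    (Vᵀ * W).rank = d + 1 :=
  stmt1_general M hrk H hH V W hW
end

section
/- Let s : E → k satisfy s e ≠ 0 for every e ∈ E. Then there exist a realization V of M and a normal matrix W for V with Vᵀ * W = S(s) if and only if MvPolynomial.eval s f = 0 for every f ∈ I_M (that is, s is a point of the slack variety lying in the torus). -/
open Classical Matrix MvPolynomial

/-!
At a point `s` of the torus `P(s) ≠ 0`, so `s` is a zero of the saturation `I_M` iff it is a zero
of `J`, i.e. iff all `(d + 2)`-minors of `S(s)` vanish. A factorization `S(s) = Vᵀ W` through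
`k^(d+1)` clearly forces this. Conversely, for a base `B` of `M` the hyperplanes `cl(B \ {x})`,
`x ∈ B`, index columns `C` of `S(s)` such that `D = S(s)[B, C]` is diagonal with nonzero
diagonal, and the vanishing of the minors bordering `D` gives `S(s) = S(s)[:, C] D⁻¹ S(s)[B, :]`.
The zero pattern of `S(s)` makes the second factor a normal matrix for the first, and a matrix `V`
with a normal matrix `W` realizes `M`: a maximal linearly independent set of columns of `V` is
spanning in `M`, since if it lay in a hyperplane `H j`, column `j` of `W` would be orthogonal to
every column of `V`.
-/

section Hyperplanes

variable {n d h : ℕ} {M : Matroid (Fin n)} {H : Fin h → Set (Fin n)} {B X : Set (Fin n)}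

lemma HasRank.ncard_eq (hrk : HasRank M (d + 1)) (hB : M.IsBase B) : B.ncard = d + 1 := by
  obtain ⟨B₀, hB₀, hcard⟩ := hrk
  rw [hB.ncard_eq_ncard_of_isBase hB₀, hcard]

lemma isHyperplane_closure_diff_singleton_s6 (hrk : HasRank M (d + 1)) (hB : M.IsBase B)
    {x : Fin n} (hx : x ∈ B) : IsHyperplane M d (M.closure (B \ {x})) := by
  have hind : M.Indep (B \ {x}) := hB.indep.sdiff _
  refine ⟨M.isFlat_closure _, B \ {x}, hind.isBasis_closure, ?_⟩
  rw [Set.ncard_sdiff_singleton_of_mem hx, hrk.ncard_eq hB, Nat.add_sub_cancel]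

lemma HypEnum.exists_notMem (hrk : HasRank M (d + 1)) (hH : HypEnum M d H) (j : Fin h) :
    ∃ i, i ∉ H j := by
  obtain ⟨hF, I, hI, hIcard⟩ := (hH.2 (H j)).mp ⟨j, rfl⟩
  by_contra! hall
  have hground : H j = M.E := hF.subset_ground.antisymm fun i _ ↦ hall i
  rw [hground, Matroid.isBasis_ground_iff] at hI
  have := hrk.ncard_eq hI
  omega

-- The witness is the hyperplane `cl(B \ {x})`.
lemma HypEnum.exists_inter_base_eq (hrk : HasRank M (d + 1)) (hH : HypEnum M d H)
    (hB : M.IsBase B) {x : Fin n} (hx : x ∈ B) : ∃ j, ∀ y ∈ B, y ∈ H j ↔ y ≠ x := by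
  obtain ⟨j, hj⟩ := (hH.2 _).mpr (isHyperplane_closure_diff_singleton_s6 hrk hB hx)
  refine ⟨j, fun y hy ↦ ⟨?_, fun hyx ↦ ?_⟩⟩
  · rintro hyj rfl
    exact hB.indep.notMem_closure_sdiff_of_mem hx (hj ▸ hyj)
  · exact hj ▸ M.mem_closure_of_mem' ⟨hy, hyx⟩ (hB.subset_ground hy)

lemma HypEnum.exists_subset_of_not_spanning (hrk : HasRank M (d + 1)) (hH : HypEnum M d H)
    (hXE : X ⊆ M.E) (hX : ¬ M.Spanning X) : ∃ j, X ⊆ H j := by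
  obtain ⟨I, hI⟩ := M.exists_isBasis X hXE
  obtain ⟨B, hB, hIB⟩ := hI.indep.exists_isBase_superset
  obtain ⟨x, hxB, hxI⟩ : ∃ x ∈ B, x ∉ I := by
    by_contra! hBI
    exact hX (hI.spanning_iff_spanning.mp (Set.Subset.antisymm hBI hIB ▸ hB.spanning))
  obtain ⟨j, hj⟩ := (hH.2 _).mpr (isHyperplane_closure_diff_singleton_s6 hrk hB hxB)
  refine ⟨j, ?_⟩
  calc X ⊆ M.closure X := M.subset_closure X hXE
    _ = M.closure I := hI.closure_eq_closure.symm
    _ ⊆ M.closure (B \ {x}) := M.closure_subset_closure (Set.subset_sdiff_singleton hIB hxI)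
    _ = H j := hj.symm

end Hyperplanes

lemma linearIndependent_of_dual_apply_eq_zero_iff {R N ι : Type*} [CommRing R]
    [NoZeroDivisors R] [AddCommGroup N] [Module R N] {v : ι → N} (f : ι → Module.Dual R N)
    (hf : ∀ i j, f j (v i) = 0 ↔ i ≠ j) : LinearIndependent R v := by
  rw [linearIndependent_iff']
  intro s g hg i hi
  have hfi : ∑ i' ∈ s, g i' * f i (v i') = 0 := by
    simpa only [map_sum, map_smul, smul_eq_mul, map_zero] using congrArg (f i) hg
  rw [Finset.sum_eq_single_of_mem i hi fun i' _ hne ↦ by rw [(hf i' i).mpr hne, mul_zero]] at hfi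
  exact (mul_eq_zero.mp hfi).resolve_right fun h0 ↦ (hf i i).mp h0 rfl

section NormalMatrix

variable {k : Type*} [Field k] {n d h : ℕ} {M : Matroid (Fin n)} {H : Fin h → Set (Fin n)}
  {V : Matrix (Fin (d + 1)) (Fin n) k} {W : Matrix (Fin (d + 1)) (Fin h) k} {B : Set (Fin n)}

lemma IsNormalMatrix.dotProduct_eq_zero_iff (hVW : IsNormalMatrix H V W) (i : Fin n)
    (j : Fin h) : Wᵀ j ⬝ᵥ Vᵀ i = 0 ↔ i ∈ H j :=
  hVW i j

lemma IsNormalMatrix.linearIndepOn_of_isBase (hrk : HasRank M (d + 1)) (hH : HypEnum M d H)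
    (hVW : IsNormalMatrix H V W) (hB : M.IsBase B) : LinearIndepOn k (Vᵀ ·) B := by
  choose j hj using fun x : B ↦ hH.exists_inter_base_eq hrk hB x.2
  refine linearIndependent_of_dual_apply_eq_zero_iff
    (fun x ↦ dotProductBilin k k (Wᵀ (j x))) fun y x ↦ ?_
  rw [dotProductBilin_apply_apply, hVW.dotProduct_eq_zero_iff, hj x y y.2,
    Subtype.val_injective.ne_iff]

lemma IsNormalMatrix.span_image_eq_top_of_isBase (hrk : HasRank M (d + 1))
    (hH : HypEnum M d H) (hVW : IsNormalMatrix H V W) (hB : M.IsBase B) :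
    Submodule.span k ((Vᵀ ·) '' B) = ⊤ := by
  have hcard : Fintype.card B = Module.finrank k (Fin (d + 1) → k) := by
    rw [Module.finrank_fin_fun, ← Nat.card_eq_fintype_card, Nat.card_coe_set_eq,
      hrk.ncard_eq hB]
  rw [Set.image_eq_range]
  exact (hVW.linearIndepOn_of_isBase hrk hH hB).span_eq_top_of_card_eq_finrank' hcard

lemma IsNormalMatrix.isRealization (hE : M.E = Set.univ) (hrk : HasRank M (d + 1))
    (hH : HypEnum M d H) (hVW : IsNormalMatrix H V W) : IsRealization M V := by
  intro I
  refine ⟨fun hI ↦ ?_, fun hI ↦ ?_⟩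
  · obtain ⟨B, hB, hIB⟩ := hI.exists_isBase_superset
    exact (hVW.linearIndepOn_of_isBase hrk hH hB).mono hIB
  replace hI : LinearIndepOn k (Vᵀ ·) I := hI
  obtain ⟨B, -, hIB, hspan, hBli⟩ := exists_linearIndepOn_extension hI (Set.subset_univ I)
  have hBspan : M.Spanning B := by
    by_contra hB
    obtain ⟨j, hj⟩ := hH.exists_subset_of_not_spanning hrk (hE ▸ Set.subset_univ B) hB
    obtain ⟨i, hi⟩ := hH.exists_notMem hrk j
    have hker :
        Submodule.span k ((Vᵀ ·) '' B) ≤ LinearMap.ker (dotProductBilin k k (Wᵀ j)) :=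
      Submodule.span_le.mpr fun _ ⟨x, hx, hxv⟩ ↦
        hxv ▸ (hVW.dotProduct_eq_zero_iff x j).mpr (hj hx)
    exact hi ((hVW.dotProduct_eq_zero_iff i j).mp (hker (hspan ⟨i, trivial, rfl⟩)))
  obtain ⟨B', hB', hB'B⟩ := hBspan.exists_isBase_subset
  have hBB' : B ⊆ B' := fun x hxB ↦ by
    by_contra hxB'
    have hx : Vᵀ x ∈ Submodule.span k ((Vᵀ ·) '' B') := by
      rw [hVW.span_image_eq_top_of_isBase hrk hH hB']
      trivial
    exact hBli.notMem_span hxB <|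
      Submodule.span_mono (Set.image_mono (Set.subset_sdiff_singleton hB'B hxB')) hx
  exact hB'.indep.subset (hIB.trans hBB')

end NormalMatrix

namespace Matrix

variable {R m n ι κ : Type*} [CommRing R]

lemma det_submatrix_mul_eq_zero_of_card_lt [IsDomain R] [Fintype ι] [Fintype κ] [DecidableEq κ]
    (A : Matrix m ι R) (B : Matrix ι n R) (r : κ → m) (c : κ → n)
    (hcard : Fintype.card ι < Fintype.card κ) : ((A * B).submatrix r c).det = 0 := by
  by_contra hdet
  have hrank := rank_of_det_ne_zero hdet
  rw [submatrix_mul A B r (id : ι → ι) c Function.bijective_id] at hrank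
  have := (rank_mul_le_left (A.submatrix r id) (B.submatrix id c)).trans
    (rank_le_card_width _)
  omega

lemma det_submatrix_eq_zero_of_forall_injective {p : ℕ} (S : Matrix m n R)
    (hS : ∀ (r : Fin p → m) (c : Fin p → n), r.Injective → c.Injective →
      (S.submatrix r c).det = 0)
    [Fintype κ] [DecidableEq κ] (hκ : Fintype.card κ = p) (r : κ → m) (c : κ → n) :
    (S.submatrix r c).det = 0 := by
  by_cases hr : r.Injective
  swap
  · obtain ⟨a, b, hab, hne⟩ := Function.not_injective_iff.mp hr
    exact det_zero_of_row_eq hne (by ext; simp [hab])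
  by_cases hc : c.Injective
  swap
  · obtain ⟨a, b, hab, hne⟩ := Function.not_injective_iff.mp hc
    exact det_zero_of_column_eq hne (by simp [hab])
  let e := Fintype.equivFinOfCardEq hκ
  rw [← det_submatrix_equiv_self e.symm, submatrix_submatrix]
  exact hS _ _ (hr.comp e.symm.injective) (hc.comp e.symm.injective)

-- The bordered minor on row `i`, column `c` is `det D` times the Schur complement
-- `S i c - S[i, j] D⁻¹ S[b, c]`, where `D = S[b, j]`.
lemma eq_submatrix_mul_inv_mul_of_det_bordered_eq_zero [Fintype ι] [DecidableEq ι]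
    (S : Matrix m n R) (b : ι → m) (j : ι → n) (hD : IsUnit (S.submatrix b j).det)
    (hbord : ∀ i c, (S.submatrix (Sum.elim b fun _ : Unit ↦ i)
      (Sum.elim j fun _ : Unit ↦ c)).det = 0) :
    S = S.submatrix id j * (S.submatrix b j)⁻¹ * S.submatrix b id := by
  ext i c
  let := (S.submatrix b j).invertibleOfIsUnitDet hD
  have hblocks : S.submatrix (Sum.elim b fun _ : Unit ↦ i) (Sum.elim j fun _ : Unit ↦ c) =
      fromBlocks (S.submatrix b j) (of fun r (_ : Unit) ↦ S (b r) c)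
        (of fun (_ : Unit) t ↦ S i (j t)) (of fun (_ : Unit) (_ : Unit) ↦ S i c) := by
    ext (r | u) (t | v) <;> rfl
  have hschur := hbord i c
  rw [hblocks, det_fromBlocks₁₁, hD.mul_right_eq_zero, det_unique, sub_apply,
    sub_eq_zero, invOf_eq_nonsing_inv] at hschur
  simpa [mul_apply] using hschur

end Matrix

section SlackMatrix

variable {k : Type*} [Field k] {n d h : ℕ} {M : Matroid (Fin n)} {H : Fin h → Set (Fin n)}

lemma isNormalMatrix_of_transpose_mul_eq {S : Matrix (Fin n) (Fin h) k}
    (hS : ∀ i j, S i j = 0 ↔ i ∈ H j) {V : Matrix (Fin (d + 1)) (Fin n) k}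
    {W : Matrix (Fin (d + 1)) (Fin h) k} (hVW : Vᵀ * W = S) : IsNormalMatrix H V W := by
  intro i j
  rw [← hS, ← hVW, Matrix.mul_apply]
  simp only [Matrix.transpose_apply, mul_comm]

lemma exists_transpose_mul_eq_of_minors_eq_zero (hrk : HasRank M (d + 1)) (hH : HypEnum M d H)
    {S : Matrix (Fin n) (Fin h) k} (hS : ∀ i j, S i j = 0 ↔ i ∈ H j)
    (hminors : ∀ (r : Fin (d + 2) → Fin n) (c : Fin (d + 2) → Fin h), r.Injective →
      c.Injective → (S.submatrix r c).det = 0) :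
    ∃ (V : Matrix (Fin (d + 1)) (Fin n) k) (W : Matrix (Fin (d + 1)) (Fin h) k),
      Vᵀ * W = S := by
  obtain ⟨B, hB, hBcard⟩ := hrk
  choose j hj using fun x : B ↦ hH.exists_inter_base_eq ⟨B, hB, hBcard⟩ hB x.2
  have hdiag : S.submatrix Subtype.val j = Matrix.diagonal fun x : B ↦ S x (j x) := by
    ext x y
    rcases eq_or_ne x y with rfl | hxy
    · simp
    · rw [Matrix.diagonal_apply_ne _ hxy, Matrix.submatrix_apply, hS, hj y x x.2]
      exact Subtype.val_injective.ne hxy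
  have hD : IsUnit (S.submatrix Subtype.val j).det := by
    rw [hdiag, Matrix.det_diagonal, isUnit_iff_ne_zero, Finset.prod_ne_zero_iff]
    exact fun x _ hx ↦ (hj x x x.2).mp ((hS _ _).mp hx) rfl
  have hcard : Fintype.card B = d + 1 := by
    rw [← Nat.card_eq_fintype_card, Nat.card_coe_set_eq, hBcard]
  have hfactor := Matrix.eq_submatrix_mul_inv_mul_of_det_bordered_eq_zero S Subtype.val j hD
    fun _ _ ↦ Matrix.det_submatrix_eq_zero_of_forall_injective S hminors (by simp [hcard]) _ _
  let A : Matrix (Fin n) B k := S.submatrix id j * (S.submatrix Subtype.val j)⁻¹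
  let C : Matrix B (Fin h) k := S.submatrix Subtype.val id
  let e := (Fintype.equivFinOfCardEq hcard).symm
  refine ⟨(A.submatrix id e)ᵀ, C.submatrix e id, ?_⟩
  rw [Matrix.transpose_transpose, Matrix.submatrix_mul_equiv, Matrix.submatrix_id_id]
  exact hfactor.symm

lemma slackEval_eq_zero_iff {s : SlackVar H → k} (hs : ∀ e, s e ≠ 0) (i : Fin n) (j : Fin h) :
    slackEval H s i j = 0 ↔ i ∈ H j := by
  by_cases hij : i ∈ H j <;> simp [slackEval, hij, hs]

lemma eval_det_submatrix_symbSlack {κ : Type*} [Fintype κ] [DecidableEq κ] (s : SlackVar H → k)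
    (r : κ → Fin n) (c : κ → Fin h) :
    eval s ((symbSlack H k).submatrix r c).det = ((slackEval H s).submatrix r c).det := by
  rw [RingHom.map_det]
  congr 1
  ext a b
  by_cases hab : r a ∈ H (c b) <;> simp [symbSlack, slackEval, hab]

lemma forall_eval_slackSet_eq_zero_iff {s : SlackVar H → k} (hs : ∀ e, s e ≠ 0) :
    (∀ f ∈ slackSet d H k, eval s f = 0) ↔
      ∀ (r : Fin (d + 2) → Fin n) (c : Fin (d + 2) → Fin h), r.Injective → c.Injective →
        ((slackEval H s).submatrix r c).det = 0 := by
  refine ⟨fun hzero r c hr hc ↦ ?_, fun hminors f ⟨N, hN⟩ ↦ ?_⟩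
  · have hgen : ((symbSlack H k).submatrix r c).det ∈ minorIdeal d H k :=
      Ideal.subset_span ⟨r, c, hr, hc, rfl⟩
    rw [← eval_det_submatrix_symbSlack]
    exact hzero _ ⟨0, by simpa using hgen⟩
  have hJ : minorIdeal d H k ≤ RingHom.ker (eval s) := by
    refine Ideal.span_le.mpr ?_
    rintro _ ⟨r, c, hr, hc, rfl⟩
    exact (eval_det_submatrix_symbSlack s r c).trans (hminors r c hr hc)
  have hP : eval s (allVarsProd H k) ≠ 0 := by
    simpa [allVarsProd, Finset.prod_ne_zero_iff] using hs
  have hPf := RingHom.mem_ker.mp (hJ hN)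
  rw [map_mul, map_pow] at hPf
  exact (mul_eq_zero.mp hPf).resolve_left (pow_ne_zero _ hP)

end SlackMatrix

/-- a nowhere-zero point `s` gives a slack matrix of a realization of `M`
iff `s` is a zero of the slack ideal. -/
theorem stmt6 {k : Type*} [Field k] {n d h : ℕ} (M : Matroid (Fin n))
    (hE : M.E = Set.univ) (hrk : HasRank M (d + 1))
    (H : Fin h → Set (Fin n)) (hH : HypEnum M d H)
    (s : SlackVar H → k) (hs : ∀ e, s e ≠ 0) :
    (∃ (V : Matrix (Fin (d + 1)) (Fin n) k) (W : Matrix (Fin (d + 1)) (Fin h) k),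
        IsRealization M V ∧ IsNormalMatrix H V W ∧ Vᵀ * W = slackEval H s) ↔
      (∀ f ∈ slackSet d H k, MvPolynomial.eval s f = 0) := by
  rw [forall_eval_slackSet_eq_zero_iff hs]
  constructor
  · rintro ⟨V, W, -, -, hVW⟩ r c - -
    rw [← hVW]
    exact Matrix.det_submatrix_mul_eq_zero_of_card_lt _ _ r c (by simp)
  · intro hminors
    obtain ⟨V, W, hVW⟩ :=
      exists_transpose_mul_eq_of_minors_eq_zero hrk hH (slackEval_eq_zero_iff hs) hminors
    have hnormal := isNormalMatrix_of_transpose_mul_eq (slackEval_eq_zero_iff hs) hVW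
    exact ⟨V, W, hnormal.isRealization hE hrk hH, hnormal, hVW⟩
end
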